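/- arXiv:1501.04841 — 4 statements merged into one kernel-verified Lean document; each statement's English description precedes it below -/
import Mathlib

section
/- Let V be a real inner product space of dimension 2m ≥ 4 with a compatible complex structure J (J is orthogonal, J² = -Id). Define the algebraic curvature operator K(X,Y) = (1/4)(⟨Y,·⟩X - ⟨X,·⟩Y + ⟨JY,·⟩JX - ⟨JX,·⟩JY + 2⟨X,JY⟩J). If Q is a symmetric endomorphism of V commuting with J such that [K(X,Z),Q] = 0 for all X ∈ V, for some fixed nonzero Z ∈ V, then Q is a real multiple of the identity. -/
/-- The constant holomorphic sectional curvature algebraic curvature tensor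
`K(X,Y)W = (1/4)(⟨Y,W⟩X - ⟨X,W⟩Y + ⟨JY,W⟩JX - ⟨JX,W⟩JY + 2⟨X,JY⟩JW)`. -/
noncomputable def chscK {V : Type*} [NormedAddCommGroup V] [InnerProductSpace ℝ V]
    (J : V →ₗ[ℝ] V) (X Y W : V) : V :=
  (1 / 4 : ℝ) • ((inner ℝ Y W : ℝ) • X - (inner ℝ X W : ℝ) • Y
    + (inner ℝ (J Y) W : ℝ) • J X - (inner ℝ (J X) W : ℝ) • J Y
    + (2 * (inner ℝ X (J Y) : ℝ)) • J W)

/-!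
For `J` skew-adjoint, `K(X,Z)` is skew-adjoint and its Jacobi operator is
`K(X,Z)Z = ¼(|Z|²X - ⟨X,Z⟩Z + 3⟨X,JZ⟩JZ)`. Since `Q` is symmetric and commutes with `K(X,Z)`,
`⟨K(X,Z)Z, QZ⟩ = ⟨K(X,Z)QZ, Z⟩ = -⟨K(X,Z)Z, QZ⟩` vanishes. For `X = QZ - cZ` with
`c = ⟨Z,QZ⟩/|Z|²`, which is orthogonal to `Z` and (as `⟨QZ,JZ⟩ = 0`) to `JZ`, this reads
`¼|Z|²|X|² = 0`, so `QZ = cZ`. Applying `Q` to the Jacobi formula and using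
`QK(X,Z)Z = K(X,Z)QZ = cK(X,Z)Z` then gives `QX = cX` for every `X`.
-/

open RealInnerProductSpace

section ComplexStructure

variable {V : Type*} [NormedAddCommGroup V] [InnerProductSpace ℝ V] {J : V →ₗ[ℝ] V}

lemma inner_apply_left_eq_neg_of_isometry_of_apply_apply (hJ2 : ∀ X, J (J X) = -X)
    (hJg : ∀ X Y, ⟪J X, J Y⟫ = ⟪X, Y⟫) (X Y : V) : ⟪J X, Y⟫ = -⟪X, J Y⟫ := by
  have := hJg X (J Y)
  rw [hJ2, inner_neg_right] at this
  linarith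

lemma chscK_smul_right (X Y W : V) (c : ℝ) : chscK J X Y (c • W) = c • chscK J X Y W := by
  simp only [chscK, inner_smul_right, map_smul, smul_smul]
  module

section SkewAdjoint

variable (hJ : ∀ X Y, ⟪J X, Y⟫ = -⟪X, J Y⟫)
include hJ

lemma inner_apply_self_eq_zero (X : V) : ⟪J X, X⟫ = 0 := by
  linarith [hJ X X, real_inner_comm (J X) X]

lemma chscK_apply_self (X Z : V) :
    chscK J X Z Z = (1 / 4 : ℝ) • (⟪Z, Z⟫ • X - ⟪X, Z⟫ • Z + (3 * ⟪X, J Z⟫) • J Z) := by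
  rw [chscK, inner_apply_self_eq_zero hJ, hJ]
  module

lemma inner_chscK_left_eq_neg (X Y W W' : V) : ⟪chscK J X Y W, W'⟫ = -⟪W, chscK J X Y W'⟫ := by
  simp only [chscK, inner_smul_left, inner_smul_right, inner_add_left, inner_add_right,
    inner_sub_left, inner_sub_right, hJ W W', RCLike.conj_to_real]
  rw [real_inner_comm X W, real_inner_comm Y W, real_inner_comm (J X) W, real_inner_comm (J Y) W]
  ring

lemma inner_map_self_apply_self_eq_zero {Q : V →ₗ[ℝ] V} (hQsym : ∀ X Y, ⟪Q X, Y⟫ = ⟪X, Q Y⟫)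
    (hQJ : ∀ X, Q (J X) = J (Q X)) (Z : V) : ⟪Q Z, J Z⟫ = 0 := by
  have h := hQsym Z (J Z)
  rw [hQJ] at h
  linarith [hJ Z (Q Z), real_inner_comm (J Z) (Q Z)]

variable {Q : V →ₗ[ℝ] V} {Z : V} (hcomm : ∀ X W, chscK J X Z (Q W) = Q (chscK J X Z W))
include hcomm

lemma inner_chscK_self_map_self_eq_zero (hQsym : ∀ X Y, ⟪Q X, Y⟫ = ⟪X, Q Y⟫) (X : V) :
    ⟪chscK J X Z Z, Q Z⟫ = 0 := by
  have h : ⟪chscK J X Z Z, Q Z⟫ = -⟪chscK J X Z Z, Q Z⟫ := calc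
    _ = ⟪Q (chscK J X Z Z), Z⟫ := (hQsym _ _).symm
    _ = ⟪chscK J X Z (Q Z), Z⟫ := by rw [hcomm]
    _ = -⟪chscK J X Z Z, Q Z⟫ := by rw [inner_chscK_left_eq_neg hJ, real_inner_comm]
  linarith

lemma map_self_eq_smul (hQsym : ∀ X Y, ⟪Q X, Y⟫ = ⟪X, Q Y⟫) (hQJ : ∀ X, Q (J X) = J (Q X))
    (hZ : Z ≠ 0) : Q Z = (⟪Z, Q Z⟫ / ⟪Z, Z⟫) • Z := by
  have hZZ : ⟪Z, Z⟫ ≠ 0 := inner_self_ne_zero.mpr hZ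
  set v := Q Z - (⟪Z, Q Z⟫ / ⟪Z, Z⟫) • Z
  have hvZ : ⟪v, Z⟫ = 0 := by
    simp only [v, inner_sub_left, real_inner_smul_left, hQsym]
    field_simp
    ring
  have hvJZ : ⟪v, J Z⟫ = 0 := by
    simp only [v, inner_sub_left, real_inner_smul_left, inner_map_self_apply_self_eq_zero hJ hQsym hQJ,
      real_inner_comm (J Z) Z, inner_apply_self_eq_zero hJ]
    ring
  have hvQZ : ⟪v, Q Z⟫ = ⟪v, v⟫ := by
    simp only [v, inner_sub_right, real_inner_smul_right, hvZ]
    ring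
  have hvv : (1 / 4 * ⟪Z, Z⟫) * ⟪v, v⟫ = 0 := by
    have := inner_chscK_self_map_self_eq_zero hJ hcomm hQsym v
    simp only [chscK_apply_self hJ, hvZ, hvJZ, real_inner_smul_left, inner_sub_left,
      inner_add_left, hvQZ] at this
    linarith
  have hv : ⟪v, v⟫ = 0 := (mul_eq_zero.mp hvv).resolve_left (mul_ne_zero (by norm_num) hZZ)
  exact sub_eq_zero.mp (inner_self_eq_zero.mp hv)

lemma map_eq_smul_of_map_self_eq_smul (hQJ : ∀ X, Q (J X) = J (Q X)) (hZ : Z ≠ 0) {c : ℝ}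
    (hQZ : Q Z = c • Z) (X : V) : Q X = c • X := by
  have hQJZ : Q (J Z) = c • J Z := by rw [hQJ, hQZ, map_smul]
  have h := hcomm X Z
  rw [hQZ, chscK_smul_right, chscK_apply_self hJ] at h
  simp only [map_smul, map_add, map_sub, hQZ, hQJZ] at h
  have hscaled : ⟪Z, Z⟫ • Q X = ⟪Z, Z⟫ • (c • X) := by
    linear_combination (norm := module) (-4 : ℝ) • h
  exact smul_right_injective V (inner_self_ne_zero.mpr hZ) hscaled

end SkewAdjoint

end ComplexStructure

theorem stmt0_general {V : Type*} [NormedAddCommGroup V] [InnerProductSpace ℝ V]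
    (J : V →ₗ[ℝ] V) (hJ2 : ∀ X, J (J X) = -X)
    (hJg : ∀ X Y : V, (inner ℝ (J X) (J Y) : ℝ) = inner ℝ X Y)
    (Q : V →ₗ[ℝ] V)
    (hQsym : ∀ X Y : V, (inner ℝ (Q X) Y : ℝ) = inner ℝ X (Q Y))
    (hQJ : ∀ X, Q (J X) = J (Q X))
    (Z : V) (hZ : Z ≠ 0)
    (hcomm : ∀ X W : V, chscK J X Z (Q W) = Q (chscK J X Z W)) :
    ∃ c : ℝ, ∀ W, Q W = c • W := by
  have hJ := inner_apply_left_eq_neg_of_isometry_of_apply_apply hJ2 hJg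
  exact ⟨_, map_eq_smul_of_map_self_eq_smul hJ hcomm hQJ hZ
    (map_self_eq_smul hJ hcomm hQsym hQJ hZ)⟩

theorem stmt0 {V : Type*} [NormedAddCommGroup V] [InnerProductSpace ℝ V]
    [FiniteDimensional ℝ V] (m : ℕ) (hm : 2 ≤ m)
    (hdim : Module.finrank ℝ V = 2 * m)
    (J : V →ₗ[ℝ] V) (hJ2 : ∀ X, J (J X) = -X)
    (hJg : ∀ X Y : V, (inner ℝ (J X) (J Y) : ℝ) = inner ℝ X Y)
    (Q : V →ₗ[ℝ] V)
    (hQsym : ∀ X Y : V, (inner ℝ (Q X) Y : ℝ) = inner ℝ X (Q Y))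
    (hQJ : ∀ X, Q (J X) = J (Q X))
    (Z : V) (hZ : Z ≠ 0)
    (hcomm : ∀ X W : V, chscK J X Z (Q W) = Q (chscK J X Z W)) :
    ∃ c : ℝ, ∀ W, Q W = c • W :=
  stmt0_general J hJ2 hJg Q hQsym hQJ Z hZ hcomm
end

section
/- Suppose F₂ : ℝ → ℝ is a C² function, F₁ : ℝ → ℝ is C⁰, and the identity 0 = F₂''(y)(x−y)² + 2(F₁'(x) + 2F₂'(y))(x−y) − 6(F₁(x) − F₂(y)) holds for all x, y in open intervals I₁, I₂ respectively (with F₁ differentiable). Then F₁ is a polynomial of degree at most 3, and F₁ = F₂ (as polynomial functions). -/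
/-!
Fix two distinct points `y₁ ≠ y₂` of `I₂`. For each `x ∈ I₁` the identity at `y₁` and at `y₂` is a
linear system in the unknowns `F₁ x` and `F₁' x` whose determinant `12 (y₁ - y₂)` does not depend
on `x`, and whose right-hand sides are polynomial in `x`; Cramer's rule makes `F₁` a cubic `p` on
`I₁`. Then, for fixed `y ∈ I₂`, the identity is a polynomial identity in `x` on the infinite set
`I₁`, so it holds for every `x`, and at `x = y` it reads `F₂ y = p y`.
-/

open Polynomial

theorem exists_natDegree_le_three_of_identity_at_two_points {y₁ y₂ a₁ b₁ c₁ a₂ b₂ c₂ : ℝ}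
    (hy : y₁ ≠ y₂) :
    ∃ p : ℝ[X], p.natDegree ≤ 3 ∧ ∀ x u v : ℝ,
      0 = a₁ * (x - y₁) ^ 2 + 2 * (v + 2 * b₁) * (x - y₁) - 6 * (u - c₁) →
      0 = a₂ * (x - y₂) ^ 2 + 2 * (v + 2 * b₂) * (x - y₂) - 6 * (u - c₂) →
      u = p.eval x := by
  have hy' : y₁ - y₂ ≠ 0 := sub_ne_zero.mpr hy
  let slope : ℝ[X] := C (2 * (y₁ - y₂))⁻¹ *
    (C a₁ * (X - C y₁) ^ 2 - C a₂ * (X - C y₂) ^ 2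
      + C (4 * b₁) * (X - C y₁) - C (4 * b₂) * (X - C y₂) + C (6 * (c₁ - c₂)))
  have hslope : slope.natDegree ≤ 2 := by
    simp only [slope]
    compute_degree
  refine ⟨C 6⁻¹ * (C a₁ * (X - C y₁) ^ 2 + 2 * (slope + C (2 * b₁)) * (X - C y₁) + C (6 * c₁)),
    by compute_degree; omega, fun x u v h₁ h₂ => ?_⟩
  have hv : v = slope.eval x := by
    simp only [slope, eval_mul, eval_add, eval_sub, eval_pow, eval_C, eval_X]
    field_simp
    linear_combination h₁ - h₂
  simp only [eval_mul, eval_add, eval_pow, eval_sub, eval_C, eval_X, eval_ofNat, ← hv]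
  linear_combination h₁ / 6

theorem eq_eval_of_identity_on_infinite {s : Set ℝ} (hs : s.Infinite) {p : ℝ[X]}
    {y a b c : ℝ}
    (h : ∀ x ∈ s, 0 = a * (x - y) ^ 2 + 2 * (p.derivative.eval x + 2 * b) * (x - y)
      - 6 * (p.eval x - c)) :
    c = p.eval y := by
  let r : ℝ[X] := C a * (X - C y) ^ 2 + 2 * (derivative p + C (2 * b)) * (X - C y)
    - 6 * (p - C c)
  have hr : r = 0 := by
    refine r.eq_zero_of_infinite_isRoot (hs.mono fun x hx => ?_)
    simp only [Set.mem_ofPred_eq, IsRoot, r, eval_sub, eval_add, eval_mul, eval_pow, eval_C,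
      eval_X, eval_ofNat]
    exact (h x hx).symm
  have := congrArg (eval y) hr
  simp only [r, eval_sub, eval_add, eval_mul, eval_pow, eval_C, eval_X, eval_ofNat, sub_self,
    eval_zero] at this
  linarith

theorem stmt3_general (a₁ b₁ a₂ b₂ : ℝ) (h₁ : a₁ < b₁) (h₂ : a₂ < b₂)
    (F₁ F₂ : ℝ → ℝ)
    (hid : ∀ x ∈ Set.Ioo a₁ b₁, ∀ y ∈ Set.Ioo a₂ b₂,
      0 = deriv (deriv F₂) y * (x - y) ^ 2
        + 2 * (deriv F₁ x + 2 * deriv F₂ y) * (x - y)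
        - 6 * (F₁ x - F₂ y)) :
    ∃ p : Polynomial ℝ, p.natDegree ≤ 3 ∧
      (∀ x ∈ Set.Ioo a₁ b₁, F₁ x = p.eval x) ∧
      (∀ y ∈ Set.Ioo a₂ b₂, F₂ y = p.eval y) := by
  obtain ⟨y₁, hy₁, y₂, hy₂, hy⟩ := (Set.Ioo_infinite h₂).nontrivial
  obtain ⟨p, hdeg, hp⟩ := exists_natDegree_le_three_of_identity_at_two_points
    (a₁ := deriv (deriv F₂) y₁) (b₁ := deriv F₂ y₁) (c₁ := F₂ y₁)
    (a₂ := deriv (deriv F₂) y₂) (b₂ := deriv F₂ y₂) (c₂ := F₂ y₂) hy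
  have hF₁ : ∀ x ∈ Set.Ioo a₁ b₁, F₁ x = p.eval x := fun x hx =>
    hp x _ _ (hid x hx y₁ hy₁) (hid x hx y₂ hy₂)
  have hF₁' : ∀ x ∈ Set.Ioo a₁ b₁, deriv F₁ x = p.derivative.eval x := fun x hx => by
    rw [← Polynomial.deriv]
    exact Filter.EventuallyEq.deriv_eq (Filter.eventually_of_mem (isOpen_Ioo.mem_nhds hx) hF₁)
  refine ⟨p, hdeg, hF₁, fun y hy => eq_eval_of_identity_on_infinite (Set.Ioo_infinite h₁)
    (a := deriv (deriv F₂) y) (b := deriv F₂ y) fun x hx => ?_⟩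
  rw [← hF₁ x hx, ← hF₁' x hx]
  exact hid x hx y hy

theorem stmt3 (a₁ b₁ a₂ b₂ : ℝ) (h₁ : a₁ < b₁) (h₂ : a₂ < b₂)
    (F₁ F₂ : ℝ → ℝ)
    (hF₁ : ContDiffOn ℝ 4 F₁ (Set.Ioo a₁ b₁))
    (hF₂ : ContDiffOn ℝ 2 F₂ (Set.Ioo a₂ b₂))
    (hid : ∀ x ∈ Set.Ioo a₁ b₁, ∀ y ∈ Set.Ioo a₂ b₂,
      0 = deriv (deriv F₂) y * (x - y) ^ 2
        + 2 * (deriv F₁ x + 2 * deriv F₂ y) * (x - y)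
        - 6 * (F₁ x - F₂ y)) :
    ∃ p : Polynomial ℝ, p.natDegree ≤ 3 ∧
      (∀ x ∈ Set.Ioo a₁ b₁, F₁ x = p.eval x) ∧
      (∀ y ∈ Set.Ioo a₂ b₂, F₂ y = p.eval y) :=
  stmt3_general a₁ b₁ a₂ b₂ h₁ h₂ F₁ F₂ hid
end

section
/- Let (M,g,J) be a Kähler manifold and A ∈ Sol(g,J) a solution of the main equation with associated vector field Λ satisfying additionally ∇Λ = μ·Id + B·A for a smooth function μ and constant B, and ∇μ = 2B·Λ^♭. If B = 0, then the endomorphism à = Λ^♭⊗Λ + (JΛ)^♭⊗JΛ is also a solution of the main equation, with associated vector field Λ̃ = μΛ, and μ is constant. -/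
/-- Extended system with `B = 0`: if `A ∈ Sol(g,J)` with vector field `Λ` satisfies
`∇Λ = μ·Id` and `dμ = 0` (so `μ` is constant), then `Ã = Λ♭⊗Λ + (JΛ)♭⊗JΛ` is also a
solution of the main equation, with vector field `Λ̃ = μΛ`. -/
theorem stmt10 {C : Type*} [CommRing C]
    {VF : Type*} [AddCommGroup VF] [Module C VF]
    (m : ℕ) (hm : 2 ≤ m)
    (D : VF → C → C) (g : VF → VF → C) (nabla : VF → VF → VF)
    (J A : VF → VF) (Λ : VF) (μ : C)
    -- D is a derivation
    (hD_add : ∀ X (f h : C), D X (f + h) = D X f + D X h)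
    (hD_mul : ∀ X (f h : C), D X (f * h) = f * D X h + h * D X f)
    -- the metric
    (hg_symm : ∀ X Y, g X Y = g Y X)
    (hg_add : ∀ X Y Z, g (X + Y) Z = g X Z + g Y Z)
    (hg_smul : ∀ (f : C) X Y, g (f • X) Y = f * g X Y)
    -- the Levi-Civita connection
    (hn_addY : ∀ X Y Z, nabla X (Y + Z) = nabla X Y + nabla X Z)
    (hn_leibniz : ∀ X (f : C) Y, nabla X (f • Y) = f • nabla X Y + (D X f) • Y)
    (hn_metric : ∀ X Y Z, D X (g Y Z) = g (nabla X Y) Z + g Y (nabla X Z))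
    -- Kähler structure
    (hJJ : ∀ X, J (J X) = -X)
    (hJg : ∀ X Y, g (J X) (J Y) = g X Y)
    (hJadd : ∀ X Y, J (X + Y) = J X + J Y)
    (hJsmul : ∀ (f : C) X, J (f • X) = f • J X)
    (hJpar : ∀ X Y, nabla X (J Y) = J (nabla X Y))
    -- A is g-symmetric and commutes with J
    (hA_sym : ∀ X Y, g (A X) Y = g X (A Y))
    (hAJ : ∀ X, A (J X) = J (A X))
    -- the main equation for (A, Λ)
    (hmain : ∀ X Y, nabla X (A Y) - A (nabla X Y)
      = g X Y • Λ + g Λ Y • X + g (J X) Y • J Λ + g (J Λ) Y • J X)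
    -- extended system with B = 0
    (hnablaΛ : ∀ X, nabla X Λ = μ • X)
    (hdμ : ∀ X, D X μ = 0) :
    -- Ã = Λ♭⊗Λ + (JΛ)♭⊗JΛ solves the main equation with Λ̃ = μΛ
    ∀ X Y, nabla X (g Λ Y • Λ + g (J Λ) Y • J Λ)
        - (g Λ (nabla X Y) • Λ + g (J Λ) (nabla X Y) • J Λ)
      = g X Y • (μ • Λ) + g (μ • Λ) Y • X
        + g (J X) Y • J (μ • Λ) + g (J (μ • Λ)) Y • J X := by
  intro X Y
  have h1 : nabla X Λ = μ • X := hnablaΛ X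
  have hJΛ : nabla X (J Λ) = μ • J X := by rw [hJpar, h1, hJsmul]
  have d1 : D X (g Λ Y) = μ * g X Y + g Λ (nabla X Y) := by
    rw [hn_metric, h1, hg_smul]
  have d2 : D X (g (J Λ) Y) = μ * g (J X) Y + g (J Λ) (nabla X Y) := by
    rw [hn_metric, hJΛ, hg_smul]
  rw [hn_addY, hn_leibniz, hn_leibniz, h1, hJΛ, d1, d2]
  simp only [hJsmul, hg_smul, smul_smul, add_smul]
  module
end

section
/- Let (M,g,J) be a Kähler manifold and (A, Λ, μ) a solution of the extended system with B = −1: ∇_X A = X^♭⊗Λ + Λ^♭⊗X + (JX)^♭⊗JΛ + (JΛ)^♭⊗JX, ∇_X Λ = μX − AX, ∇μ = −2Λ^♭. Then à = A² + Λ^♭⊗Λ + (JΛ)^♭⊗JΛ satisfies the main equation with associated vector field Λ̃ = (A + μ·Id)Λ. -/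
/-- Extended system with `B = -1`: if `(A, Λ, μ)` solves
`∇_X A = X♭⊗Λ + Λ♭⊗X + (JX)♭⊗JΛ + (JΛ)♭⊗JX`, `∇_X Λ = μX − AX`, `∇μ = −2Λ♭`,
then `Ã = A² + Λ♭⊗Λ + (JΛ)♭⊗JΛ` satisfies the main equation with vector field
`Λ̃ = (A + μ·Id)Λ`. -/
theorem stmt11 {C : Type*} [CommRing C]
    {VF : Type*} [AddCommGroup VF] [Module C VF]
    (m : ℕ) (hm : 2 ≤ m)
    (D : VF → C → C) (g : VF → VF → C) (nabla : VF → VF → VF)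
    (J A : VF → VF) (Λ : VF) (μ : C)
    -- D is a derivation
    (hD_add : ∀ X (f h : C), D X (f + h) = D X f + D X h)
    (hD_mul : ∀ X (f h : C), D X (f * h) = f * D X h + h * D X f)
    -- the metric
    (hg_symm : ∀ X Y, g X Y = g Y X)
    (hg_add : ∀ X Y Z, g (X + Y) Z = g X Z + g Y Z)
    (hg_smul : ∀ (f : C) X Y, g (f • X) Y = f * g X Y)
    -- the Levi-Civita connection
    (hn_addY : ∀ X Y Z, nabla X (Y + Z) = nabla X Y + nabla X Z)
    (hn_leibniz : ∀ X (f : C) Y, nabla X (f • Y) = f • nabla X Y + (D X f) • Y)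
    (hn_metric : ∀ X Y Z, D X (g Y Z) = g (nabla X Y) Z + g Y (nabla X Z))
    -- Kähler structure
    (hJJ : ∀ X, J (J X) = -X)
    (hJg : ∀ X Y, g (J X) (J Y) = g X Y)
    (hJadd : ∀ X Y, J (X + Y) = J X + J Y)
    (hJsmul : ∀ (f : C) X, J (f • X) = f • J X)
    (hJpar : ∀ X Y, nabla X (J Y) = J (nabla X Y))
    -- A is g-symmetric, C-linear and commutes with J
    (hA_sym : ∀ X Y, g (A X) Y = g X (A Y))
    (hAJ : ∀ X, A (J X) = J (A X))
    (hAadd : ∀ X Y, A (X + Y) = A X + A Y)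
    (hAsmul : ∀ (f : C) X, A (f • X) = f • A X)
    -- the extended system with B = -1
    (hmain : ∀ X Y, nabla X (A Y) - A (nabla X Y)
      = g X Y • Λ + g Λ Y • X + g (J X) Y • J Λ + g (J Λ) Y • J X)
    (hnablaΛ : ∀ X, nabla X Λ = μ • X - A X)
    (hdμ : ∀ X, D X μ = -(2 * g Λ X)) :
    -- Ã = A² + Λ♭⊗Λ + (JΛ)♭⊗JΛ solves the main equation with Λ̃ = AΛ + μΛ
    ∀ X Y, nabla X (A (A Y) + g Λ Y • Λ + g (J Λ) Y • J Λ)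
        - (A (A (nabla X Y)) + g Λ (nabla X Y) • Λ + g (J Λ) (nabla X Y) • J Λ)
      = g X Y • (A Λ + μ • Λ) + g (A Λ + μ • Λ) Y • X
        + g (J X) Y • J (A Λ + μ • Λ) + g (J (A Λ + μ • Λ)) Y • J X := by
  intro X Y
  have hg_sub : ∀ U V W, g (U - V) W = g U W - g V W := by
    intro U V W
    have h : U - V = U + (-1 : C) • V := by module
    rw [h, hg_add, hg_smul]; ring
  have hJ_sub : ∀ U V, J (U - V) = J U - J V := by
    intro U V
    have h : U - V = U + (-1 : C) • V := by module
    rw [h, hJadd, hJsmul]; module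
  have e1 : g X (A Y) = g (A X) Y := (hA_sym X Y).symm
  have e2 : g Λ (A Y) = g (A Λ) Y := (hA_sym Λ Y).symm
  have e3 : g (J X) (A Y) = g (J (A X)) Y := by rw [← hA_sym, hAJ]
  have e4 : g (J Λ) (A Y) = g (J (A Λ)) Y := by rw [← hA_sym, hAJ]
  have hAY : nabla X (A Y) = A (nabla X Y)
      + (g X Y • Λ + g Λ Y • X + g (J X) Y • J Λ + g (J Λ) Y • J X) := by
    have := hmain X Y
    linear_combination (norm := module) this
  have hA_appl : A (nabla X (A Y)) = A (A (nabla X Y))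
      + (g X Y • A Λ + g Λ Y • A X + g (J X) Y • J (A Λ) + g (J Λ) Y • J (A X)) := by
    rw [hAY, hAadd, hAadd, hAadd, hAadd, hAsmul, hAsmul, hAsmul, hAsmul, hAJ, hAJ]
  have k1 := hmain X (A Y)
  rw [e1, e2, e3, e4] at k1
  have H1 : nabla X (A (A Y)) = A (A (nabla X Y))
      + g X Y • A Λ + g Λ Y • A X + g (J X) Y • J (A Λ) + g (J Λ) Y • J (A X)
      + g (A X) Y • Λ + g (A Λ) Y • X + g (J (A X)) Y • J Λ + g (J (A Λ)) Y • J X := by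
    linear_combination (norm := module) k1 + hA_appl
  have hDΛ : D X (g Λ Y) = μ * g X Y - g (A X) Y + g Λ (nabla X Y) := by
    rw [hn_metric, hnablaΛ, hg_sub, hg_smul]
  have H2 : nabla X (g Λ Y • Λ) = g Λ Y • (μ • X - A X)
      + (μ * g X Y - g (A X) Y + g Λ (nabla X Y)) • Λ := by
    rw [hn_leibniz, hnablaΛ, hDΛ]
  have hnJΛ : nabla X (J Λ) = μ • J X - J (A X) := by
    rw [hJpar, hnablaΛ, hJ_sub, hJsmul]
  have hDJΛ : D X (g (J Λ) Y) = μ * g (J X) Y - g (J (A X)) Y + g (J Λ) (nabla X Y) := by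
    rw [hn_metric, hnJΛ, hg_sub, hg_smul]
  have H3 : nabla X (g (J Λ) Y • J Λ) = g (J Λ) Y • (μ • J X - J (A X))
      + (μ * g (J X) Y - g (J (A X)) Y + g (J Λ) (nabla X Y)) • J Λ := by
    rw [hn_leibniz, hnJΛ, hDJΛ]
  have eg : g (A Λ + μ • Λ) Y = g (A Λ) Y + μ * g Λ Y := by rw [hg_add, hg_smul]
  have eJ : J (A Λ + μ • Λ) = J (A Λ) + μ • J Λ := by rw [hJadd, hJsmul]
  have egJ : g (J (A Λ + μ • Λ)) Y = g (J (A Λ)) Y + μ * g (J Λ) Y := by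
    rw [eJ, hg_add, hg_smul]
  rw [hn_addY, hn_addY, eg, egJ, eJ]
  linear_combination (norm := module) H1 + H2 + H3
end
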